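/- Let G be a finite abelian group and A an abelian group, divisible by the exponent of G, with trivial G-action. Then two central extensions 1 → A → Θᵢ → G → 1 (i = 1,2) with the property that for all θ,θ' ∈ Θᵢ the commutator [θ,θ'] equals α(e(β(θ), β(θ'))) for the same alternating bilinear pairing e : G × G → A are isomorphic as extensions (i.e., there is a group isomorphism Θ₁ → Θ₂ commuting with the maps to G and from A). -/

import Mathlib

open scoped commutatorElement

lemma exists_monoidHom_section {Q G : Type*} [CommGroup Q] [CommGroup G] [Finite G]
    (π : Q →* G) (hπ : Function.Surjective π)
    (hd : ∀ u : Q, π u = 1 → ∀ k : ℕ, k ∣ Monoid.exponent G → ∃ v : Q, π v = 1 ∧ v ^ k = u) :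
    ∃ s : G →* Q, ∀ g, π (s g) = g := by
  classical
  obtain ⟨ι, hι, n, hn, ⟨ee⟩⟩ := CommGroup.equiv_prod_multiplicative_zmod_of_finite G
  set w : ∀ i, Multiplicative (ZMod (n i)) := fun i => Multiplicative.ofAdd (1 : ZMod (n i))
    with hw
  set gen : ι → G := fun i => ee.symm (Pi.mulSingle i (w i)) with hgen
  have hwpow : ∀ i, w i ^ (n i) = 1 := by
    intro i
    have : (n i) • (1 : ZMod (n i)) = 0 := by
      simp [nsmul_eq_mul, ZMod.natCast_self]
    rw [hw]
    rw [← ofAdd_nsmul, this, ofAdd_zero]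
  have hgen_pow : ∀ i, gen i ^ (n i) = 1 := by
    intro i
    rw [hgen, ← map_pow, ← MonoidHom.mulSingle_apply, ← map_pow, hwpow, map_one, map_one]
  have hdvd : ∀ i, n i ∣ Monoid.exponent G := by
    intro i
    have h1 : (Pi.mulSingle (M := fun i => Multiplicative (ZMod (n i))) i (w i)) ^ Monoid.exponent G = 1 := by
      have := Monoid.pow_exponent_eq_one (gen i)
      have h2 := congrArg ee this
      rw [map_pow, hgen, MulEquiv.apply_symm_apply, map_one] at h2
      exact h2
    have h3 := congrFun h1 i
    rw [Pi.pow_apply, Pi.mulSingle_eq_same, Pi.one_apply, hw] at h3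
    have h4 : Monoid.exponent G • (1 : ZMod (n i)) = 0 := by
      have := congrArg Multiplicative.toAdd h3
      simpa [← ofAdd_nsmul] using this
    rw [nsmul_eq_mul, mul_one] at h4
    exact (ZMod.natCast_eq_zero_iff _ _).mp h4
  choose x hx using fun i => hπ (gen i)
  have hker : ∀ i, π (x i ^ n i) = 1 := by
    intro i; rw [map_pow, hx, hgen_pow]
  choose b hb1 hb2 using fun i => hd (x i ^ n i) (hker i) (n i) (hdvd i)
  set y : ι → Q := fun i => x i * (b i)⁻¹ with hy
  have hπy : ∀ i, π (y i) = gen i := by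
    intro i; rw [hy]; simp [hx i, hb1 i]
  have hypow : ∀ i, y i ^ n i = 1 := by
    intro i; rw [hy, mul_pow, inv_pow, hb2, mul_inv_cancel]
  have hsmul : ∀ i, (zmultiplesHom (Additive Q) (Additive.ofMul (y i))) ((n i : ℤ)) = 0 := by
    intro i
    show ((n i : ℤ)) • (Additive.ofMul (y i)) = 0
    rw [← ofMul_zpow, zpow_natCast, hypow, ofMul_one]
  set ψ : ∀ i, Multiplicative (ZMod (n i)) →* Q := fun i =>
    AddMonoidHom.toMultiplicativeLeft
      (ZMod.lift (n i) ⟨zmultiplesHom (Additive Q) (Additive.ofMul (y i)), hsmul i⟩) with hψ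
  have hψ1 : ∀ i, ψ i (Multiplicative.ofAdd (1 : ZMod (n i))) = y i := by
    intro i
    rw [hψ]
    show Additive.toMul (ZMod.lift (n i)
      ⟨zmultiplesHom (Additive Q) (Additive.ofMul (y i)), hsmul i⟩
        (Multiplicative.toAdd (Multiplicative.ofAdd (1 : ZMod (n i))))) = y i
    rw [toAdd_ofAdd]
    rw [show (1 : ZMod (n i)) = ((1 : ℤ) : ZMod (n i)) by norm_cast]
    rw [ZMod.lift_coe]
    show Additive.toMul ((1:ℤ) • (Additive.ofMul (y i))) = y i
    simp
  have hcomm : Pairwise fun i j => ∀ a b, Commute (ψ i a) (ψ j b) :=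
    fun i j _ => fun a b => Commute.all _ _
  set σ : (∀ i, Multiplicative (ZMod (n i))) →* Q := MonoidHom.noncommPiCoprod ψ hcomm
    with hσ
  refine ⟨σ.comp ee.toMonoidHom, ?_⟩
  have key : π.comp σ = ee.symm.toMonoidHom := by
    apply MonoidHom.functions_ext
    intro i z
    obtain ⟨m, hm⟩ := ZMod.intCast_surjective (Multiplicative.toAdd z)
    have hzz : z = (Multiplicative.ofAdd ((1 : ZMod (n i)))) ^ m := by
      apply Multiplicative.toAdd.injective
      rw [toAdd_zpow, toAdd_ofAdd, zsmul_eq_mul, mul_one, hm]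
    rw [hzz]
    have hsingle : Pi.mulSingle (M := fun i => Multiplicative (ZMod (n i))) i ((Multiplicative.ofAdd ((1 : ZMod (n i)))) ^ m)
        = (Pi.mulSingle (M := fun i => Multiplicative (ZMod (n i))) i (Multiplicative.ofAdd ((1 : ZMod (n i))))) ^ m := by
      rw [Pi.mulSingle_zpow]
    rw [hsingle, map_zpow, map_zpow]
    congr 1
    show π (σ (Pi.mulSingle i (Multiplicative.ofAdd (1 : ZMod (n i))))) = _
    rw [hσ, MonoidHom.noncommPiCoprod_mulSingle, hψ1, hπy, hgen]
    rfl
  intro g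
  show (π.comp σ) (ee g) = g
  rw [key]
  exact ee.symm_apply_apply g

/-- Two central extensions of a finite abelian group `G` by a divisible abelian group `A`
whose commutator pairings agree with a fixed alternating bilinear pairing `e` are
isomorphic as extensions. -/
theorem central_extensions_with_same_commutator_pairing_isomorphic
    (A : Type*) [CommGroup A] (G : Type*) [CommGroup G] [Finite G]
    (Θ₁ Θ₂ : Type*) [Group Θ₁] [Group Θ₂]
    (α₁ : A →* Θ₁) (β₁ : Θ₁ →* G) (α₂ : A →* Θ₂) (β₂ : Θ₂ →* G)
    (hα₁ : Function.Injective α₁) (hα₂ : Function.Injective α₂)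
    (hβ₁ : Function.Surjective β₁) (hβ₂ : Function.Surjective β₂)
    (hexact₁ : α₁.range = β₁.ker) (hexact₂ : α₂.range = β₂.ker)
    (hcent₁ : ∀ a : A, α₁ a ∈ Subgroup.center Θ₁)
    (hcent₂ : ∀ a : A, α₂ a ∈ Subgroup.center Θ₂)
    (e : G → G → A)
    (hbil₁ : ∀ g g' h : G, e (g * g') h = e g h * e g' h)
    (hbil₂ : ∀ g h h' : G, e g (h * h') = e g h * e g h')
    (halt : ∀ g : G, e g g = 1)
    (hdiv : ∀ (a : A) (k : ℕ), k ∣ Monoid.exponent G → ∃ b : A, b ^ k = a)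
    (hcomm₁ : ∀ θ θ' : Θ₁, ⁅θ, θ'⁆ = α₁ (e (β₁ θ) (β₁ θ')))
    (hcomm₂ : ∀ θ θ' : Θ₂, ⁅θ, θ'⁆ = α₂ (e (β₂ θ) (β₂ θ'))) :
    ∃ φ : Θ₁ ≃* Θ₂, (∀ a : A, φ (α₁ a) = α₂ a) ∧ ∀ θ : Θ₁, β₂ (φ θ) = β₁ θ := by
  classical
  have hker1 : ∀ a : A, β₁ (α₁ a) = 1 := by
    intro a
    have h0 : α₁ a ∈ α₁.range := ⟨a, rfl⟩
    rw [hexact₁] at h0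
    exact MonoidHom.mem_ker.mp h0
  have hker2 : ∀ a : A, β₂ (α₂ a) = 1 := by
    intro a
    have h0 : α₂ a ∈ α₂.range := ⟨a, rfl⟩
    rw [hexact₂] at h0
    exact MonoidHom.mem_ker.mp h0
  have hrange1 : ∀ θ : Θ₁, β₁ θ = 1 → θ ∈ α₁.range := fun θ h => by
    rw [hexact₁]; exact MonoidHom.mem_ker.mpr h
  have hrange2 : ∀ θ : Θ₂, β₂ θ = 1 → θ ∈ α₂.range := fun θ h => by
    rw [hexact₂]; exact MonoidHom.mem_ker.mpr h
  -- partial inverses of α₁, α₂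
  set aOf₁ : Θ₁ → A := fun θ => if h : θ ∈ α₁.range then h.choose else 1 with haOf₁def
  set aOf₂ : Θ₂ → A := fun θ => if h : θ ∈ α₂.range then h.choose else 1 with haOf₂def
  have haOf₁ : ∀ θ : Θ₁, β₁ θ = 1 → α₁ (aOf₁ θ) = θ := by
    intro θ h
    have hm := hrange1 θ h
    have : aOf₁ θ = hm.choose := by rw [haOf₁def]; simp only; rw [dif_pos hm]
    rw [this]
    exact hm.choose_spec
  have haOf₂ : ∀ θ : Θ₂, β₂ θ = 1 → α₂ (aOf₂ θ) = θ := by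
    intro θ h
    have hm := hrange2 θ h
    have : aOf₂ θ = hm.choose := by rw [haOf₂def]; simp only; rw [dif_pos hm]
    rw [this]
    exact hm.choose_spec
  have haOfα₁ : ∀ a : A, aOf₁ (α₁ a) = a := fun a => hα₁ (by rw [haOf₁ _ (hker1 a)])
  have haOfα₂ : ∀ a : A, aOf₂ (α₂ a) = a := fun a => hα₂ (by rw [haOf₂ _ (hker2 a)])
  have hc₁ : ∀ (a : A) (z : Θ₁), z * α₁ a = α₁ a * z := fun a z =>
    Subgroup.mem_center_iff.mp (hcent₁ a) z
  have hc₂ : ∀ (a : A) (z : Θ₂), z * α₂ a = α₂ a * z := fun a z =>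
    Subgroup.mem_center_iff.mp (hcent₂ a) z
  -- commuting rearrangements
  have swap₁ : ∀ (u v : Θ₁) (b b' : A), (u * α₁ b) * (v * α₁ b') = (u * v) * α₁ (b * b') := by
    intro u v b b'
    rw [mul_assoc u (α₁ b), ← mul_assoc (α₁ b) v, ← hc₁ b v, mul_assoc v, ← mul_assoc u v,
      ← map_mul]
  have swap₂ : ∀ (u v : Θ₂) (b b' : A), (u * α₂ b) * (v * α₂ b') = (u * v) * α₂ (b * b') := by
    intro u v b b'
    rw [mul_assoc u (α₂ b), ← mul_assoc (α₂ b) v, ← hc₂ b v, mul_assoc v, ← mul_assoc u v,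
      ← map_mul]
  -- the comparison homomorphism and its kernel
  set δ : Θ₁ × Θ₂ →* G :=
    (β₁.comp (MonoidHom.fst Θ₁ Θ₂)) * (β₂.comp (MonoidHom.snd Θ₁ Θ₂))⁻¹ with hδdef
  have memK : ∀ p : Θ₁ × Θ₂, p ∈ δ.ker ↔ β₁ p.1 = β₂ p.2 := by
    intro p
    rw [MonoidHom.mem_ker, hδdef]
    simp [mul_inv_eq_one]
  have hmemA : ∀ a : A, (α₁.prod α₂) a ∈ δ.ker := by
    intro a
    rw [memK]
    show β₁ (α₁ a) = β₂ (α₂ a)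
    rw [hker1, hker2]
  set ιm : A →* δ.ker := (α₁.prod α₂).codRestrict δ.ker hmemA with hιdef
  have hιval : ∀ a : A, ((ιm a : Θ₁ × Θ₂)) = (α₁ a, α₂ a) := fun a => rfl
  set D : Subgroup δ.ker := ιm.range with hDdef
  have hcentK : ∀ (a : A) (k : δ.ker), k * ιm a = ιm a * k := by
    intro a k
    apply Subtype.ext
    rw [Subgroup.coe_mul, Subgroup.coe_mul, hιval]
    apply Prod.ext_iff.mpr
    exact ⟨hc₁ a _, hc₂ a _⟩
  haveI hDnormal : D.Normal := by
    constructor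
    intro d hd k
    obtain ⟨a, rfl⟩ := MonoidHom.mem_range.mp hd
    have h1 : k * ιm a * k⁻¹ = ιm a := by rw [hcentK a k, mul_inv_cancel_right]
    rw [h1]
    exact ⟨a, rfl⟩
  have hcommutatorD : ∀ k k' : δ.ker, ⁅k, k'⁆ ∈ D := by
    intro k k'
    refine MonoidHom.mem_range.mpr ⟨e (β₁ (k : Θ₁ × Θ₂).1) (β₁ (k' : Θ₁ × Θ₂).1), ?_⟩
    apply Subtype.ext
    rw [hιval]
    have hco : ((⁅k, k'⁆ : δ.ker) : Θ₁ × Θ₂) = ⁅(k : Θ₁ × Θ₂), (k' : Θ₁ × Θ₂)⁆ := by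
      simp [commutatorElement_def]
    rw [hco]
    have hk := (memK _).mp k.2
    have hk' := (memK _).mp k'.2
    have hfst : (⁅(k : Θ₁ × Θ₂), (k' : Θ₁ × Θ₂)⁆).1 = ⁅(k : Θ₁ × Θ₂).1, (k' : Θ₁ × Θ₂).1⁆ := rfl
    have hsnd : (⁅(k : Θ₁ × Θ₂), (k' : Θ₁ × Θ₂)⁆).2 = ⁅(k : Θ₁ × Θ₂).2, (k' : Θ₁ × Θ₂).2⁆ := rfl
    apply Prod.ext_iff.mpr
    constructor
    · rw [hfst, hcomm₁]
    · rw [hsnd, hcomm₂, ← hk, ← hk']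
  letI instQ : CommGroup (δ.ker ⧸ D) :=
    { (inferInstance : Group (δ.ker ⧸ D)) with
      mul_comm := by
        intro u v
        obtain ⟨k, rfl⟩ := QuotientGroup.mk_surjective u
        obtain ⟨k', rfl⟩ := QuotientGroup.mk_surjective v
        show QuotientGroup.mk (k * k') = QuotientGroup.mk (k' * k)
        rw [QuotientGroup.eq]
        have hidd : (k * k')⁻¹ * (k' * k) = ⁅k'⁻¹, k⁻¹⁆ := by group
        rw [hidd]
        exact hcommutatorD _ _ }
  set pr : δ.ker →* G := β₁.comp ((MonoidHom.fst Θ₁ Θ₂).comp (δ.ker).subtype) with hprdef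
  have hprD : ∀ d ∈ D, pr d = 1 := by
    intro d hd
    obtain ⟨a, rfl⟩ := MonoidHom.mem_range.mp hd
    show β₁ ((ιm a : Θ₁ × Θ₂)).1 = 1
    rw [hιval]
    exact hker1 a
  set π : (δ.ker ⧸ D) →* G := QuotientGroup.lift D pr hprD with hπdef
  have hπmk : ∀ k : δ.ker, π (QuotientGroup.mk k) = β₁ (k : Θ₁ × Θ₂).1 := fun k => rfl
  have hπsurj : Function.Surjective π := by
    intro g
    obtain ⟨x, hx⟩ := hβ₁ g
    obtain ⟨y, hy⟩ := hβ₂ g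
    refine ⟨QuotientGroup.mk ⟨(x, y), (memK _).mpr (by rw [hx, hy])⟩, ?_⟩
    rw [hπmk]
    exact hx
  have hmemJ : ∀ a : A, (α₁.prod 1) a ∈ δ.ker := by
    intro a
    rw [memK]
    show β₁ (α₁ a) = β₂ 1
    rw [hker1, map_one]
  set jK : A →* δ.ker := (α₁.prod 1).codRestrict δ.ker hmemJ with hjKdef
  have hjKval : ∀ a : A, ((jK a : Θ₁ × Θ₂)) = (α₁ a, 1) := fun a => rfl
  set j : A →* (δ.ker ⧸ D) := (QuotientGroup.mk' D).comp jK with hjdef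
  have hjval : ∀ a : A, j a = QuotientGroup.mk (jK a) := fun a => rfl
  have hπj : ∀ a : A, π (j a) = 1 := by
    intro a
    rw [hjval, hπmk]
    show β₁ ((jK a : Θ₁ × Θ₂)).1 = 1
    rw [hjKval]
    exact hker1 a
  have hkerπ : ∀ u : δ.ker ⧸ D, π u = 1 → ∃ a : A, j a = u := by
    intro u hu
    obtain ⟨k, rfl⟩ := QuotientGroup.mk_surjective u
    have hk1 : β₁ (k : Θ₁ × Θ₂).1 = 1 := by rw [← hπmk]; exact hu
    have hk2 : β₂ (k : Θ₁ × Θ₂).2 = 1 := by rw [← (memK _).mp k.2]; exact hk1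
    obtain ⟨a, ha⟩ := hrange1 _ hk1
    obtain ⟨b, hb⟩ := hrange2 _ hk2
    refine ⟨a * b⁻¹, ?_⟩
    rw [hjval, QuotientGroup.eq]
    refine MonoidHom.mem_range.mpr ⟨b, ?_⟩
    apply Subtype.ext
    rw [hιval, Subgroup.coe_mul, Subgroup.coe_inv, hjKval]
    apply Prod.ext_iff.mpr
    constructor
    · show α₁ b = (α₁ (a * b⁻¹), (1 : Θ₂)).1⁻¹ * (k : Θ₁ × Θ₂).1
      show α₁ b = (α₁ (a * b⁻¹))⁻¹ * (k : Θ₁ × Θ₂).1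
      rw [← ha, ← map_inv, ← map_mul]
      congr 1
      group
    · show α₂ b = (α₁ (a * b⁻¹), (1 : Θ₂)).2⁻¹ * (k : Θ₁ × Θ₂).2
      show α₂ b = (1 : Θ₂)⁻¹ * (k : Θ₁ × Θ₂).2
      rw [← hb, inv_one, one_mul]
  have hdQ : ∀ u : δ.ker ⧸ D, π u = 1 → ∀ k : ℕ, k ∣ Monoid.exponent G →
      ∃ v : δ.ker ⧸ D, π v = 1 ∧ v ^ k = u := by
    intro u hu k hk
    obtain ⟨a, rfl⟩ := hkerπ u hu
    obtain ⟨b, hb⟩ := hdiv a k hk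
    exact ⟨j b, hπj b, by rw [← map_pow, hb]⟩
  obtain ⟨s, hs⟩ := exists_monoidHom_section π hπsurj hdQ
  -- representatives
  have hrep : ∀ g : G, ∃ k : δ.ker, QuotientGroup.mk k = s g ∧ (g = 1 → k = 1) := by
    intro g
    by_cases hg : g = 1
    · refine ⟨1, ?_, fun _ => rfl⟩
      rw [hg, map_one]
      rfl
    · obtain ⟨k, hk⟩ := QuotientGroup.mk_surjective (s g)
      exact ⟨k, hk, fun h => absurd h hg⟩
  choose rep hrep1 hrep2 using hrep
  set X : G → Θ₁ := fun g => ((rep g : δ.ker) : Θ₁ × Θ₂).1 with hXdef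
  set Y : G → Θ₂ := fun g => ((rep g : δ.ker) : Θ₁ × Θ₂).2 with hYdef
  have hXval : ∀ g, X g = ((rep g : δ.ker) : Θ₁ × Θ₂).1 := fun _ => rfl
  have hYval : ∀ g, Y g = ((rep g : δ.ker) : Θ₁ × Θ₂).2 := fun _ => rfl
  have hβX : ∀ g, β₁ (X g) = g := by
    intro g
    rw [hXval, ← hπmk (rep g), hrep1]
    exact hs g
  have hβY : ∀ g, β₂ (Y g) = g := by
    intro g
    rw [hYval, ← (memK _).mp (rep g).2]
    exact hβX g
  have hX1 : X 1 = 1 := by rw [hXval, hrep2 1 rfl]; rfl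
  have hY1 : Y 1 = 1 := by rw [hYval, hrep2 1 rfl]; rfl
  have hH : ∀ g g' : G, ∃ t : A,
      X g * X g' = X (g * g') * α₁ t ∧ Y g * Y g' = Y (g * g') * α₂ t := by
    intro g g'
    have hmk : (QuotientGroup.mk (rep (g * g')) : δ.ker ⧸ D) = QuotientGroup.mk (rep g * rep g') := by
      rw [hrep1, QuotientGroup.mk_mul, hrep1, hrep1, ← map_mul]
    rw [QuotientGroup.eq] at hmk
    obtain ⟨t, ht⟩ := MonoidHom.mem_range.mp hmk
    have h1 := congrArg (fun z : δ.ker => ((z : Θ₁ × Θ₂)).1) ht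
    have h2 := congrArg (fun z : δ.ker => ((z : Θ₁ × Θ₂)).2) ht
    simp only [hιval, Subgroup.coe_mul, Subgroup.coe_inv, Prod.fst_mul, Prod.fst_inv,
      Prod.snd_mul, Prod.snd_inv] at h1 h2
    refine ⟨t, ?_, ?_⟩
    · rw [hXval g, hXval g', hXval (g * g'), h1, mul_inv_cancel_left]
    · rw [hYval g, hYval g', hYval (g * g'), h2, mul_inv_cancel_left]
  -- decompositions
  have hdec₁ : ∀ θ : Θ₁, α₁ (aOf₁ ((X (β₁ θ))⁻¹ * θ)) = (X (β₁ θ))⁻¹ * θ := by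
    intro θ
    apply haOf₁
    rw [map_mul, map_inv, hβX, inv_mul_cancel]
  have hdec₂ : ∀ y : Θ₂, α₂ (aOf₂ ((Y (β₂ y))⁻¹ * y)) = (Y (β₂ y))⁻¹ * y := by
    intro y
    apply haOf₂
    rw [map_mul, map_inv, hβY, inv_mul_cancel]
  set φf : Θ₁ → Θ₂ := fun θ => Y (β₁ θ) * α₂ (aOf₁ ((X (β₁ θ))⁻¹ * θ)) with hφdef
  set ψf : Θ₂ → Θ₁ := fun y => X (β₂ y) * α₁ (aOf₂ ((Y (β₂ y))⁻¹ * y)) with hψfdef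
  have hφval : ∀ θ, φf θ = Y (β₁ θ) * α₂ (aOf₁ ((X (β₁ θ))⁻¹ * θ)) := fun _ => rfl
  have hψval : ∀ y, ψf y = X (β₂ y) * α₁ (aOf₂ ((Y (β₂ y))⁻¹ * y)) := fun _ => rfl
  have hβφ : ∀ θ, β₂ (φf θ) = β₁ θ := by
    intro θ
    rw [hφval, map_mul, hβY, hker2, mul_one]
  have hβψ : ∀ y, β₁ (ψf y) = β₂ y := by
    intro y
    rw [hψval, map_mul, hβX, hker1, mul_one]
  have hleft : ∀ θ, ψf (φf θ) = θ := by
    intro θ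
    rw [hψval, hβφ θ]
    have h1 : (Y (β₁ θ))⁻¹ * φf θ = α₂ (aOf₁ ((X (β₁ θ))⁻¹ * θ)) := by
      rw [hφval, inv_mul_cancel_left]
    rw [h1, haOfα₂, hdec₁, mul_inv_cancel_left]
  have hright : ∀ y, φf (ψf y) = y := by
    intro y
    rw [hφval, hβψ y]
    have h1 : (X (β₂ y))⁻¹ * ψf y = α₁ (aOf₂ ((Y (β₂ y))⁻¹ * y)) := by
      rw [hψval, inv_mul_cancel_left]
    rw [h1, haOfα₁, hdec₂, mul_inv_cancel_left]
  have hmul : ∀ θ θ' : Θ₁, φf (θ * θ') = φf θ * φf θ' := by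
    intro θ θ'
    set g := β₁ θ with hg
    set g' := β₁ θ' with hg'
    obtain ⟨t, ht1, ht2⟩ := hH g g'
    have hβm : β₁ (θ * θ') = g * g' := by rw [map_mul, ← hg, ← hg']
    set a := aOf₁ ((X g)⁻¹ * θ) with ha
    set a' := aOf₁ ((X g')⁻¹ * θ') with ha'
    have hθ : θ = X g * α₁ a := by
      have hd := hdec₁ θ
      rw [← hg, ← ha] at hd
      rw [hd, mul_inv_cancel_left]
    have hθ' : θ' = X g' * α₁ a' := by
      have hd := hdec₁ θ'
      rw [← hg', ← ha'] at hd
      rw [hd, mul_inv_cancel_left]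
    have hkey : (X (g * g'))⁻¹ * (θ * θ') = α₁ (t * (a * a')) := by
      conv_lhs => rw [hθ, hθ']
      rw [swap₁, ht1, mul_assoc, inv_mul_cancel_left, ← map_mul]
    have hL : φf (θ * θ') = Y (g * g') * α₂ (t * (a * a')) := by
      rw [hφval (θ * θ'), hβm, hkey, haOfα₁]
    have hR : φf θ * φf θ' = Y (g * g') * α₂ (t * (a * a')) := by
      rw [hφval θ, hφval θ', ← hg, ← hg', ← ha, ← ha', swap₂, ht2, mul_assoc,
        map_mul α₂ t (a * a')]
    rw [hL, hR]
  refine ⟨{ toFun := φf, invFun := ψf, left_inv := hleft, right_inv := hright,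
            map_mul' := hmul }, ?_, ?_⟩
  · intro a
    show φf (α₁ a) = α₂ a
    rw [hφval, hker1 a, hX1, hY1, inv_one, one_mul, one_mul, haOfα₁]
  · intro θ
    show β₂ (φf θ) = β₁ θ
    exact hβφ θ
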